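/- Soundness of minimal explanations: Suppose (p, θ, μ) is an optimal solution of the MILP minimizing ∑ μ_{α,I} subject to constraints (2b)–(2e). Suppose μ_{α,I} = 1, and suppose there is exactly one state s with α ∈ Act(s) and I ⊆ L(s), and Act(s) and L(s) are singletons. Then p_s > 0, i.e., the state explained by the sentence (α,I) belongs to the critical subsystem. -/

import Mathlib

/-!
If `p s₀ = 0`, switch off both the sentence `(α, I)` and the choice `θ_{s₀,α}`. Every other
state enabling `α` has a label set not containing `I`, so its constraint (2e) does not see
`μ_{α,I}`; and at `s₀` the constraints hold trivially because `p s₀ = 0`. The result is a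
feasible solution whose objective is one less, contradicting optimality.
-/

/-- Feasibility of the MILP (2b)–(2e) with objective variables:
`p` probabilities, `θ` binary strategy choices, `μ` binary sentence choices. -/
def MILPFeasible {S Act AP : Type*} [Fintype S] [DecidableEq AP]
    (P : S → Act → S → ℝ) (sbar : S) (T : Set S) (lam : ℝ)
    (En : S → Finset Act) (L : S → Finset AP)
    (p : S → ℝ) (θ : S → Act → ℝ) (μ : Act → Finset AP → ℝ) : Prop :=
  (∀ s, p s ∈ Set.Icc (0 : ℝ) 1) ∧
  (∀ s α, θ s α = 0 ∨ θ s α = 1) ∧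
  (∀ α I, μ α I = 0 ∨ μ α I = 1) ∧
  lam < p sbar ∧
  (∀ s ∈ T, p s = 1) ∧
  (∀ s ∉ T, ∀ α ∈ En s, p s ≤ (1 - θ s α) + ∑ s', P s α s' * p s') ∧
  (∀ s ∉ T, p s ≤ ∑ α ∈ En s, θ s α) ∧
  (∀ s ∉ T, ∀ α ∈ En s, θ s α ≤ ∑ I ∈ (L s).powerset, μ α I)

lemma binary_nonneg {x : ℝ} (h : x = 0 ∨ x = 1) : 0 ≤ x := by
  rcases h with rfl | rfl <;> norm_num

section ZeroAt

variable {X Y : Type*} [DecidableEq X] [DecidableEq Y]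

def zeroAt (f : X → Y → ℝ) (x : X) (y : Y) : X → Y → ℝ :=
  fun a b => if a = x ∧ b = y then 0 else f a b

lemma zeroAt_binary {f : X → Y → ℝ} (hf : ∀ a b, f a b = 0 ∨ f a b = 1) (x : X) (y : Y)
    (a : X) (b : Y) : zeroAt f x y a b = 0 ∨ zeroAt f x y a b = 1 := by
  unfold zeroAt
  split_ifs
  exacts [Or.inl rfl, hf a b]

lemma sum_sum_zeroAt [Fintype X] [Fintype Y] (f : X → Y → ℝ) (x : X) (y : Y) :
    ∑ a, ∑ b, zeroAt f x y a b = ∑ a, ∑ b, f a b - f x y := by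
  have hsplit : ∀ a b, zeroAt f x y a b = f a b - if a = x ∧ b = y then f a b else 0 := by
    intro a b
    unfold zeroAt
    split_ifs <;> ring
  simp [hsplit, Finset.sum_sub_distrib, ite_and]

end ZeroAt

lemma MILPFeasible.zeroAt {S Act AP : Type*} [Fintype S] [DecidableEq S] [DecidableEq Act]
    [DecidableEq AP] {P : S → Act → S → ℝ} {sbar : S} {T : Set S} {lam : ℝ}
    {En : S → Finset Act} {L : S → Finset AP}
    {p : S → ℝ} {θ : S → Act → ℝ} {μ : Act → Finset AP → ℝ}
    (h : MILPFeasible P sbar T lam En L p θ μ) {s0 : S} {α : Act} {I : Finset AP}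
    (hp : p s0 = 0) (huniq : ∀ s, α ∈ En s → I ⊆ L s → s = s0) :
    MILPFeasible P sbar T lam En L p (zeroAt θ s0 α) (zeroAt μ α I) := by
  obtain ⟨hbd, hθ, hμ, hlam, hT, hc, hd, he⟩ := h
  refine ⟨hbd, zeroAt_binary hθ s0 α, zeroAt_binary hμ α I, hlam, hT, ?_, ?_, ?_⟩
  · intro s hs β hβ
    by_cases hsβ : s = s0 ∧ β = α
    · obtain ⟨rfl, rfl⟩ := hsβ
      have hcs := hc s hs β hβ
      have hθs := binary_nonneg (hθ s β)
      simp only [_root_.zeroAt, and_self, if_true]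
      linarith
    · simpa [_root_.zeroAt, hsβ] using hc s hs β hβ
  · intro s hs
    by_cases hs0 : s = s0
    · rw [hs0, hp]
      exact Finset.sum_nonneg fun β _ => binary_nonneg (zeroAt_binary hθ s0 α s0 β)
    · simpa [_root_.zeroAt, hs0] using hd s hs
  · intro s hs β hβ
    by_cases hsβ : s = s0 ∧ β = α
    · exact (if_pos hsβ).trans_le
        (Finset.sum_nonneg fun J _ => binary_nonneg (zeroAt_binary hμ α I β J))
    · calc _ = θ s β := if_neg hsβ
        _ ≤ ∑ J ∈ (L s).powerset, μ β J := he s hs β hβ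
        _ = _ := Finset.sum_congr rfl fun J hJ => (if_neg ?_).symm
      rintro ⟨rfl, rfl⟩
      exact hsβ ⟨huniq s hβ (Finset.mem_powerset.mp hJ), rfl⟩

theorem soundness_of_minimal_explanation_general {S Act AP : Type*}
    [Fintype S] [Fintype Act] [Fintype AP] [DecidableEq AP]
    (P : S → Act → S → ℝ) (sbar : S) (T : Set S) (lam : ℝ)
    (En : S → Finset Act) (L : S → Finset AP)
    (p : S → ℝ) (θ : S → Act → ℝ) (μ : Act → Finset AP → ℝ)
    (hfeas : MILPFeasible P sbar T lam En L p θ μ)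
    (hopt : ∀ p' θ' μ', MILPFeasible P sbar T lam En L p' θ' μ' →
      (∑ α : Act, ∑ I : Finset AP, μ α I) ≤ ∑ α : Act, ∑ I : Finset AP, μ' α I)
    (α : Act) (I : Finset AP) (hμ1 : μ α I = 1)
    (s0 : S) (huniq : ∀ s, (α ∈ En s ∧ I ⊆ L s) ↔ s = s0) :
    0 < p s0 := by
  classical
  refine (hfeas.1 s0).1.lt_of_ne' fun hp => ?_
  have hle := hopt _ _ _ (hfeas.zeroAt hp fun s hα hI => (huniq s).1 ⟨hα, hI⟩)
  rw [sum_sum_zeroAt, hμ1] at hle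
  linarith

/-- Soundness of minimal explanations: in an optimal MILP solution, if the
sentence `(α, I)` is selected (`μ α I = 1`) and there is exactly one state `s₀`
with `α` enabled and `I ⊆ L s₀`, where moreover `Act(s₀)` and `L(s₀)` are
singletons, then `p s₀ > 0`, i.e. `s₀` belongs to the critical subsystem. -/
theorem soundness_of_minimal_explanation {S Act AP : Type*}
    [Fintype S] [Fintype Act] [Fintype AP] [DecidableEq Act] [DecidableEq AP]
    (P : S → Act → S → ℝ) (sbar : S) (T : Set S) (lam : ℝ)
    (En : S → Finset Act) (L : S → Finset AP)
    (p : S → ℝ) (θ : S → Act → ℝ) (μ : Act → Finset AP → ℝ)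
    (hfeas : MILPFeasible P sbar T lam En L p θ μ)
    (hopt : ∀ p' θ' μ', MILPFeasible P sbar T lam En L p' θ' μ' →
      (∑ α : Act, ∑ I : Finset AP, μ α I) ≤ ∑ α : Act, ∑ I : Finset AP, μ' α I)
    (α : Act) (I : Finset AP) (hμ1 : μ α I = 1)
    (s0 : S) (huniq : ∀ s, (α ∈ En s ∧ I ⊆ L s) ↔ s = s0)
    (hActSingle : En s0 = {α}) (hLSingle : L s0 = I)
    (hs0 : s0 ∉ T) :
    0 < p s0 :=
  soundness_of_minimal_explanation_general P sbar T lam En L p θ μ hfeas hopt α I hμ1 s0 huniq
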